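/- arXiv:1109.4208 — 4 statements merged into one kernel-verified Lean document; each statement's English description precedes it below -/
import Mathlib

section
/- Define f(k) = ⌊m/k⌋(k-1)(k + ⌊m/k⌋·k - 2m) + m² + m. For positive integers k with ⌊m/k⌋ ≤ k (in particular when m ≤ k²), we have f(k+1) ≥ f(k); that is, f is nondecreasing in this range. -/
/-- `f(k) = ⌊m/k⌋(k-1)(k + ⌊m/k⌋k - 2m) + m² + m`. -/
def f (m k : ℕ) : ℤ :=
  ((m / k : ℕ) : ℤ) * ((k : ℤ) - 1) * ((k : ℤ) + ((m / k : ℕ) : ℤ) * (k : ℤ) - 2 * (m : ℤ))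
    + (m : ℤ) ^ 2 + (m : ℤ)

/-!
Write `m = q k + r` with `q = ⌊m/k⌋` and `0 ≤ r < k`. Passing from `k` to `k + 1` the quotient
either stays `q` or, because `q ≤ k + 1`, drops to `q - 1`. Treating the quotient as a free
variable, `f(k+1) - f(k)` is then a polynomial identity in each case: it equals `2q(k - r)` in the
first and `2r(k - q)` in the second, and both are nonnegative.
-/

def fPoly (q k m : ℤ) : ℤ :=
  q * (k - 1) * (k + q * k - 2 * m) + m ^ 2 + m

lemma f_eq_fPoly (m k : ℕ) : f m k = fPoly (m / k : ℕ) k m := rfl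

lemma fPoly_succ_sub_of_eq {q k m r : ℤ} (h : m = q * k + r) :
    fPoly q (k + 1) m - fPoly q k m = 2 * q * (k - r) := by
  subst h; unfold fPoly; ring

lemma fPoly_pred_succ_sub_of_eq {q k m r : ℤ} (h : m = q * k + r) :
    fPoly (q - 1) (k + 1) m - fPoly q k m = 2 * r * (k - q) := by
  subst h; unfold fPoly; ring

lemma Nat.div_le_div_succ_add_one {m k : ℕ} (h : m / k ≤ k + 1) :
    m / k ≤ m / (k + 1) + 1 := by
  obtain h0 | ⟨p, hp⟩ : m / k = 0 ∨ ∃ p, m / k = p + 1 := by cases m / k <;> simp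
  · simp [h0]
  · rw [hp, Nat.add_le_add_iff_right, Nat.le_div_iff_mul_le k.succ_pos]
    calc p * (k + 1) ≤ (p + 1) * k := by nlinarith
      _ = m / k * k := by rw [hp]
      _ ≤ m := Nat.div_mul_le_self m k

theorem f_monotone_general (m k : ℕ) (hk : 0 < k) (h : m / k ≤ k) :
    f m k ≤ f m (k + 1) := by
  have hdiv : (m : ℤ) = (m / k : ℕ) * k + (m % k : ℕ) := by
    exact_mod_cast (Nat.div_add_mod' m k).symm
  have hle : m / (k + 1) ≤ m / k := Nat.div_le_div_left k.le_succ hk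
  have hge := Nat.div_le_div_succ_add_one (h.trans k.le_succ)
  rw [f_eq_fPoly, f_eq_fPoly, ← sub_nonneg, Nat.cast_add_one]
  obtain hq | hq : ((m / (k + 1) : ℕ) : ℤ) = (m / k : ℕ) ∨
      ((m / (k + 1) : ℕ) : ℤ) = (m / k : ℕ) - 1 := by omega
  · rw [hq, fPoly_succ_sub_of_eq hdiv]
    exact mul_nonneg (by positivity) (sub_nonneg.2 (by exact_mod_cast (Nat.mod_lt m hk).le))
  · rw [hq, fPoly_pred_succ_sub_of_eq hdiv]
    exact mul_nonneg (by positivity) (sub_nonneg.2 (by exact_mod_cast h))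

/-- if `⌊m/k⌋ ≤ k` then `f(k+1) ≥ f(k)`. -/
theorem f_monotone (m k : ℕ) (hm : 0 < m) (hk : 0 < k) (h : m / k ≤ k) :
    f m k ≤ f m (k + 1) :=
  f_monotone_general m k hk h
end

section
/- Let B be a bipartite graph with bipartition (X,Y), |X| = k, |Y| = n - k, and m edges. Let B̄ be the bipartite complement of B on the same bipartition (with k(n-k) - m edges). Then σ₂(B) = n(2m + k² - nk) + σ₂(B̄), where σ₂(G) denotes the sum of squares of the degrees of the vertices of G. -/
open Finset

/-- Sum of squares of degrees. -/
noncomputable def sigma2 {V : Type*} [Fintype V] (G : SimpleGraph V) : ℕ :=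
  ∑ v, ((G.neighborSet v).ncard) ^ 2

/-- Every edge of `G` joins `X` to its complement. -/
def IsBipartiteOn {V : Type*} (X : Set V) (G : SimpleGraph V) : Prop :=
  ∀ ⦃u v⦄, G.Adj u v → (u ∈ X ∧ v ∉ X) ∨ (v ∈ X ∧ u ∉ X)

/-! Write `K` for the complete bipartite graph `⊤.between X Xᶜ`, whose degree `D v` is `n - k`
on `X` and `k` on `Xᶜ`; the bipartite complement is `K \ B`. Vertexwise
`d_B(v)² = 2 D(v) d_B(v) - D(v)² + d_B̄(v)²`. Each side of the bipartition carries all `m` edges,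
so `∑ D d_B = (n - k) m + k m = n m`, while `∑ D² = k (n - k)² + (n - k) k² = n k (n - k)`. -/

namespace SimpleGraph

variable {V : Type*}

lemma ncard_neighborSet_eq_degree (G : SimpleGraph V) (v : V) [Fintype (G.neighborSet v)] :
    (G.neighborSet v).ncard = G.degree v := by
  rw [Set.ncard_eq_toFinset_card', Set.toFinset_card, card_neighborSet_eq_degree]

lemma ncard_edgeSet_eq_card_edgeFinset (G : SimpleGraph V) [Fintype G.edgeSet] :
    G.edgeSet.ncard = #G.edgeFinset := by
  rw [← coe_edgeFinset, Set.ncard_coe_finset]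

lemma ncard_neighborSet_sdiff_add {G H : SimpleGraph V} [Finite V] (hGH : G ≤ H) (v : V) :
    ((H \ G).neighborSet v).ncard + (G.neighborSet v).ncard = (H.neighborSet v).ncard := by
  rw [neighborSet_sdiff]
  exact Set.ncard_sdiff_add_ncard_of_subset (neighborSet_mono hGH v)

lemma neighborSet_top_between_compl_of_mem {s : Set V} {v : V} (hv : v ∈ s) :
    ((⊤ : SimpleGraph V).between s sᶜ).neighborSet v = sᶜ := by
  ext w
  simp only [mem_neighborSet, between_adj, top_adj, Set.mem_compl_iff]
  exact ⟨fun h => h.2.elim (·.2) fun h' => absurd hv h'.1,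
    fun hw => ⟨fun hvw => hw (hvw ▸ hv), .inl ⟨hv, hw⟩⟩⟩

lemma neighborSet_top_between_compl_of_notMem {s : Set V} {v : V} (hv : v ∉ s) :
    ((⊤ : SimpleGraph V).between s sᶜ).neighborSet v = s := by
  simpa [between_comm] using neighborSet_top_between_compl_of_mem (s := sᶜ) hv

end SimpleGraph

open SimpleGraph

section

variable {V : Type*}

lemma sigma2_eq_sum_add_sigma2_sdiff [Fintype V] {G H : SimpleGraph V} (hGH : G ≤ H) :
    (sigma2 G : ℤ) = ∑ v, (2 * ((H.neighborSet v).ncard : ℤ) * (G.neighborSet v).ncard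
      - ((H.neighborSet v).ncard : ℤ) ^ 2) + sigma2 (H \ G) := by
  simp only [sigma2, Nat.cast_sum, Nat.cast_pow, ← sum_add_distrib]
  refine sum_congr rfl fun v _ => ?_
  rw [← ncard_neighborSet_sdiff_add hGH v]
  push_cast
  ring

lemma eq_top_between_compl_sdiff_of_adj_iff {X : Set V} {B Bc : SimpleGraph V}
    (hBc : ∀ u v, Bc.Adj u v ↔ (((u ∈ X ∧ v ∉ X) ∨ (v ∈ X ∧ u ∉ X)) ∧ ¬ B.Adj u v)) :
    Bc = (⊤ : SimpleGraph V).between X Xᶜ \ B := by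
  ext u v
  simp only [hBc, sdiff_adj, between_adj, top_adj, Set.mem_compl_iff]
  grind

namespace IsBipartiteOn

variable {G : SimpleGraph V}

lemma isBipartiteWith {X : Set V} (h : IsBipartiteOn X G) : G.IsBipartiteWith X Xᶜ :=
  ⟨disjoint_compl_right, fun _ _ hadj => (h hadj).imp_right And.symm⟩

lemma le_top_between {X : Set V} (h : IsBipartiteOn X G) :
    G ≤ (⊤ : SimpleGraph V).between X Xᶜ :=
  fun _ _ hadj => ⟨hadj.ne, (h hadj).imp_right And.symm⟩

variable [Fintype V] {s : Finset V}

lemma sum_ncard_neighborSet (h : IsBipartiteOn ↑s G) :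
    ∑ v ∈ s, (G.neighborSet v).ncard = G.edgeSet.ncard := by
  classical
  have hG : G.IsBipartiteWith ↑s ↑sᶜ := by simpa using h.isBipartiteWith
  simp only [ncard_neighborSet_eq_degree, ncard_edgeSet_eq_card_edgeFinset]
  exact isBipartiteWith_sum_degrees_eq_card_edges hG

lemma sum_ncard_neighborSet_compl [DecidableEq V] (h : IsBipartiteOn ↑s G) :
    ∑ v ∈ sᶜ, (G.neighborSet v).ncard = G.edgeSet.ncard := by
  classical
  have hG : G.IsBipartiteWith ↑s ↑sᶜ := by simpa using h.isBipartiteWith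
  simp only [ncard_neighborSet_eq_degree, ncard_edgeSet_eq_card_edgeFinset]
  exact isBipartiteWith_sum_degrees_eq_card_edges' hG

lemma sum_two_mul_sub_sq_eq [DecidableEq V] (h : IsBipartiteOn ↑s G) :
    ∑ v, (2 * ((((⊤ : SimpleGraph V).between ↑s (↑s)ᶜ).neighborSet v).ncard : ℤ)
        * (G.neighborSet v).ncard
      - ((((⊤ : SimpleGraph V).between ↑s (↑s)ᶜ).neighborSet v).ncard : ℤ) ^ 2) =
      Fintype.card V * (2 * G.edgeSet.ncard + (#s : ℤ) ^ 2 - Fintype.card V * #s) := by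
  have hs : ∀ v ∈ s, (((⊤ : SimpleGraph V).between ↑s (↑s)ᶜ).neighborSet v).ncard = #sᶜ :=
    fun v hv => by
      rw [neighborSet_top_between_compl_of_mem (Finset.mem_coe.mpr hv), ← coe_compl,
        Set.ncard_coe_finset]
  have hsc : ∀ v ∈ sᶜ, (((⊤ : SimpleGraph V).between ↑s (↑s)ᶜ).neighborSet v).ncard = #s :=
    fun v hv => by
      rw [neighborSet_top_between_compl_of_notMem (by simpa using hv), Set.ncard_coe_finset]
  have hdeg := congrArg (Nat.cast : ℕ → ℤ) h.sum_ncard_neighborSet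
  have hdeg' := congrArg (Nat.cast : ℕ → ℤ) h.sum_ncard_neighborSet_compl
  have hcard := congrArg (Nat.cast : ℕ → ℤ) (card_add_card_compl s)
  push_cast at hdeg hdeg' hcard
  rw [← sum_add_sum_compl s]
  calc _ = ∑ v ∈ s, (2 * (#sᶜ : ℤ) * (G.neighborSet v).ncard - (#sᶜ : ℤ) ^ 2)
        + ∑ v ∈ sᶜ, (2 * (#s : ℤ) * (G.neighborSet v).ncard - (#s : ℤ) ^ 2) := by
        congr 1 <;> refine sum_congr rfl fun v hv => ?_
        · rw [hs v hv]
        · rw [hsc v hv]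
    _ = _ := by
      simp only [sum_sub_distrib, ← mul_sum, sum_const, nsmul_eq_mul, hdeg, hdeg']
      rw [← hcard]
      ring

end IsBipartiteOn

end

/-- for a bipartite graph `B` on bipartition `(X, Xᶜ)` with `|X| = k`,
`n` vertices and `m` edges, and its bipartite complement `Bc`,
`σ₂(B) = n(2m + k² - nk) + σ₂(Bc)`. -/
theorem sigma2_eq_of_bipartite_compl {V : Type*} [Fintype V] (X : Set V)
    (B Bc : SimpleGraph V) (n k m : ℕ)
    (hn : n = Fintype.card V) (hk : k = X.ncard)
    (hB : IsBipartiteOn X B) (hm : B.edgeSet.ncard = m)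
    (hBc : ∀ u v, Bc.Adj u v ↔
      (((u ∈ X ∧ v ∉ X) ∨ (v ∈ X ∧ u ∉ X)) ∧ ¬ B.Adj u v)) :
    (sigma2 B : ℤ) =
      (n : ℤ) * (2 * (m : ℤ) + (k : ℤ) ^ 2 - (n : ℤ) * (k : ℤ)) + (sigma2 Bc : ℤ) := by
  classical
  obtain ⟨s, rfl⟩ : ∃ s : Finset V, ↑s = X := ⟨X.toFinset, Set.coe_toFinset X⟩
  subst hn hk hm
  rw [eq_top_between_compl_sdiff_of_adj_iff hBc, sigma2_eq_sum_add_sigma2_sdiff hB.le_top_between,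
    hB.sum_two_mul_sub_sq_eq, Set.ncard_coe_finset]
end

section
/- Among all bipartite graphs with n ≥ 2 vertices and m edges where 0 ≤ m ≤ n - 2, the unique graph maximizing the sum of squares of degrees is K_{1,m} ∪ S_{n-m-1}, the star with m edges together with n - m - 1 isolated vertices. -/
open Finset

/-- `K_{1,m} ∪ S_{n-m-1}` on `Fin n`: vertex `0` joined to vertices `1, …, m`,
all other vertices isolated. -/
def starUnion (n m : ℕ) : SimpleGraph (Fin n) :=
  SimpleGraph.fromRel (fun u v => u.val = 0 ∧ 1 ≤ v.val ∧ v.val ≤ m)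

/-!
Double counting over darts gives `2 σ₂(G) = ∑_{uv} (d(u) + d(v))`, and for an edge `uv` the
edges at `u` or `v` number `d(u) + d(v) - 1 ≤ m`, so `σ₂(G) ≤ m (m + 1)`, with equality exactly
when every edge meets every other edge. Pairwise intersecting edges form a star or a triangle,
and a bipartite graph has no triangle; two stars with `m` edges on the same vertex set are
isomorphic, and `K_{1,m} ∪ S_{n-m-1}` is such a star.
-/

namespace SimpleGraph

section VertexCover

variable {V : Type*} {G : SimpleGraph V}

theorem IsVertexCover.adj_iff_of_singleton {c : V} (hc : G.IsVertexCover {c}) {x y : V} :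
    G.Adj x y ↔ x = c ∧ G.Adj c y ∨ y = c ∧ G.Adj c x := by
  refine ⟨fun h => ?_, ?_⟩
  · rcases hc h with rfl | rfl
    · exact .inl ⟨rfl, h⟩
    · exact .inr ⟨rfl, h.symm⟩
  · rintro (⟨rfl, h⟩ | ⟨rfl, h⟩)
    exacts [h, h.symm]

theorem IsVertexCover.pair_of_singleton {c : V} (hc : G.IsVertexCover {c}) {u v : V}
    (huv : G.Adj u v) : G.IsVertexCover {u, v} :=
  hc.subset <| Set.singleton_subset_iff.mpr <| by simpa [eq_comm] using hc huv

/-- An edge avoiding `a` and an edge avoiding `b` both meet `ab` and meet each other, which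
forces a triangle on `a`, `b` and a third vertex. -/
theorem exists_isVertexCover_singleton_of_cliqueFree
    (hG : ∀ ⦃u v⦄, G.Adj u v → G.IsVertexCover {u, v}) (hK3 : G.CliqueFree 3) {a b : V}
    (hab : G.Adj a b) : ∃ c, G.IsVertexCover {c} := by
  classical
  by_contra! hno
  have htri : ∀ ⦃p q r⦄, G.Adj p q → G.Adj p r → G.Adj q r → False := fun p q r hpq hpr hqr =>
    hK3 {p, q, r} (is3Clique_triple_iff.mpr ⟨hpq, hpr, hqr⟩)
  simp only [IsVertexCover, Set.mem_insert_iff, Set.mem_singleton_iff, not_forall] at hno hG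
  obtain ⟨x, y, hxy, hxa⟩ := hno a
  obtain ⟨x', y', hxy', hxb⟩ := hno b
  have hmeet₁ := hG hab hxy
  have hmeet₂ := hG hab hxy'
  have hmeet₃ := hG hxy hxy'
  grind [adj_comm]

variable [Fintype V]

theorem IsVertexCover.nonempty_iso_of_singleton {G' : SimpleGraph V} [DecidableRel G.Adj]
    [DecidableRel G'.Adj] {c c' : V} (hc : G.IsVertexCover {c}) (hc' : G'.IsVertexCover {c'})
    (hdeg : G.degree c = G'.degree c') : Nonempty (G ≃g G') := by
  let e : G.neighborSet c ≃ G'.neighborSet c' :=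
    Fintype.equivOfCardEq (by rw [card_neighborSet_eq_degree, card_neighborSet_eq_degree, hdeg])
  let f : Option (G.neighborSet c) ↪ V :=
    (Function.Embedding.subtype _).optionElim c fun ⟨y, hy⟩ => y.2.ne' hy
  let f' : Option (G.neighborSet c) ↪ V :=
    (e.toEmbedding.trans (Function.Embedding.subtype _)).optionElim c'
      fun ⟨y, hy⟩ => (e y).2.ne' hy
  obtain ⟨σ, hσ⟩ := Equiv.Perm.exists_extending_pair f f' f.injective f'.injective
  have hσc : σ c = c' := hσ none
  have hσe : ∀ z : G.neighborSet c, σ z = e z := fun z => hσ (some z)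
  have hσN : ∀ x, G'.Adj c' (σ x) ↔ G.Adj c x := by
    refine fun x => ⟨fun hx => ?_, fun hx => hσe ⟨x, hx⟩ ▸ (e ⟨x, hx⟩).2⟩
    obtain ⟨z, hz⟩ := e.surjective ⟨σ x, hx⟩
    have : (z : V) = x := σ.injective (by rw [hσe, hz])
    exact this ▸ z.2
  refine ⟨⟨σ, fun {x y} => ?_⟩⟩
  rw [hc'.adj_iff_of_singleton, hc.adj_iff_of_singleton, ← hσc, σ.injective.eq_iff,
    σ.injective.eq_iff, hσc, hσN, hσN]

variable [DecidableEq V] [DecidableRel G.Adj]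

theorem IsVertexCover.degree_eq_card_edgeFinset_of_singleton {c : V}
    (hc : G.IsVertexCover {c}) : G.degree c = #G.edgeFinset := by
  rw [← card_incidenceFinset_eq_degree]
  refine congrArg card ((G.incidenceFinset_subset c).antisymm fun e he => ?_)
  induction e with | h x y => ?_
  have hxy : G.Adj x y := mem_edgeFinset.mp he
  rw [mem_incidenceFinset]
  rcases hc hxy with rfl | rfl
  exacts [G.mk'_mem_incidenceSet_left_iff.mpr hxy, G.mk'_mem_incidenceSet_right_iff.mpr hxy]

end VertexCover

section DegreeSquares

variable {V : Type*} [Fintype V] (G : SimpleGraph V) [DecidableRel G.Adj]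

theorem two_mul_card_edgeFinset_mul_succ :
    2 * (#G.edgeFinset * (#G.edgeFinset + 1)) = ∑ _d : G.Dart, (#G.edgeFinset + 1) := by
  rw [sum_const, card_univ, dart_card_eq_twice_card_edges, smul_eq_mul, mul_assoc]

variable [DecidableEq V]

theorem sum_degree_sq_eq_sum_dart_degree_fst :
    ∑ v, G.degree v ^ 2 = ∑ d : G.Dart, G.degree d.fst := by
  rw [← Finset.sum_fiberwise univ (fun d : G.Dart => d.fst)]
  refine Finset.sum_congr rfl fun v _ => ?_
  rw [Finset.sum_congr rfl fun d hd => by rw [(Finset.mem_filter.mp hd).2],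
    Finset.sum_const, G.dart_fst_fiber_card_eq_degree, smul_eq_mul, sq]

theorem two_mul_sum_degree_sq :
    2 * ∑ v, G.degree v ^ 2 = ∑ d : G.Dart, (G.degree d.fst + G.degree d.snd) := by
  have hsnd : ∑ d : G.Dart, G.degree d.snd = ∑ d : G.Dart, G.degree d.fst :=
    Fintype.sum_equiv (Dart.symm_involutive.toPerm _) _ _ fun _ => rfl
  rw [Finset.sum_add_distrib, hsnd, sum_degree_sq_eq_sum_dart_degree_fst, two_mul]

variable {G}

theorem degree_add_degree_eq_card_incidenceFinset_union_add_one {u v : V} (h : G.Adj u v) :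
    G.degree u + G.degree v = #(G.incidenceFinset u ∪ G.incidenceFinset v) + 1 := by
  have hinter : G.incidenceFinset u ∩ G.incidenceFinset v = {s(u, v)} := by
    simpa [← Finset.coe_inj] using G.incidenceSet_inter_incidenceSet_of_adj h
  rw [← card_incidenceFinset_eq_degree, ← card_incidenceFinset_eq_degree,
    ← card_union_add_card_inter, hinter, card_singleton]

theorem degree_add_degree_le {u v : V} (h : G.Adj u v) :
    G.degree u + G.degree v ≤ #G.edgeFinset + 1 := by
  rw [degree_add_degree_eq_card_incidenceFinset_union_add_one h]
  gcongr
  exact union_subset (G.incidenceFinset_subset u) (G.incidenceFinset_subset v)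

theorem degree_add_degree_eq_iff_isVertexCover {u v : V} (h : G.Adj u v) :
    G.degree u + G.degree v = #G.edgeFinset + 1 ↔ G.IsVertexCover {u, v} := by
  have hsub := union_subset (G.incidenceFinset_subset u) (G.incidenceFinset_subset v)
  rw [degree_add_degree_eq_card_incidenceFinset_union_add_one h, add_left_inj,
    ← (card_le_card hsub).ge_iff_eq, eq_iff_card_le_of_subset hsub, Subset.antisymm_iff,
    and_iff_right hsub]
  simp only [IsVertexCover, subset_iff, Sym2.forall, mem_edgeFinset, mem_edgeSet, mem_union,
    mem_incidenceFinset, incidenceSet, Set.mem_ofPred_eq, Sym2.mem_iff, Set.mem_insert_iff,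
    Set.mem_singleton_iff]
  grind

variable (G) in
theorem sum_degree_sq_le : ∑ v, G.degree v ^ 2 ≤ #G.edgeFinset * (#G.edgeFinset + 1) := by
  have := sum_le_sum (s := (univ : Finset G.Dart)) fun d _ => degree_add_degree_le d.adj
  rw [← two_mul_sum_degree_sq, ← two_mul_card_edgeFinset_mul_succ] at this
  omega

theorem sum_degree_sq_eq_iff :
    ∑ v, G.degree v ^ 2 = #G.edgeFinset * (#G.edgeFinset + 1) ↔
      ∀ ⦃u v⦄, G.Adj u v → G.IsVertexCover {u, v} := by
  rw [← mul_right_inj' two_ne_zero, two_mul_sum_degree_sq, two_mul_card_edgeFinset_mul_succ,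
    sum_eq_sum_iff_of_le fun (d : G.Dart) _ => degree_add_degree_le d.adj]
  simp only [mem_univ, true_imp_iff]
  exact ⟨fun h u v huv => (degree_add_degree_eq_iff_isVertexCover huv).mp (h ⟨(u, v), huv⟩),
    fun h d => (degree_add_degree_eq_iff_isVertexCover d.adj).mpr (h d.adj)⟩

end DegreeSquares

end SimpleGraph

open SimpleGraph

theorem sigma2_eq_sum_degree_sq {V : Type*} [Fintype V] (G : SimpleGraph V)
    [DecidableRel G.Adj] : sigma2 G = ∑ v, G.degree v ^ 2 := by
  simp only [sigma2, Set.ncard_eq_toFinset_card', ← card_neighborFinset_eq_degree, neighborFinset]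

theorem starUnion_zero_right (n : ℕ) : starUnion n 0 = ⊥ := by
  ext u v
  simp only [starUnion, fromRel_adj, bot_adj, iff_false, not_and]
  omega

theorem starUnion_isVertexCover {n : ℕ} (m : ℕ) (hn : 0 < n) :
    (starUnion n m).IsVertexCover {⟨0, hn⟩} := by
  intro x y hxy
  simp only [starUnion, fromRel_adj, Set.mem_singleton_iff, Fin.ext_iff] at hxy ⊢
  omega

theorem starUnion_adj_zero {n m : ℕ} (hn : 0 < n) {v : Fin n} :
    (starUnion n m).Adj ⟨0, hn⟩ v ↔ 1 ≤ v.val ∧ v.val ≤ m := by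
  simp only [starUnion, fromRel_adj, ne_eq, Fin.ext_iff, true_and]
  omega

theorem starUnion_degree {n m : ℕ} (h : m < n) [DecidableRel (starUnion n m).Adj] :
    (starUnion n m).degree ⟨0, by omega⟩ = m := by
  have hN : ((starUnion n m).neighborFinset ⟨0, by omega⟩).map Fin.valEmbedding = Icc 1 m := by
    ext i
    simp only [mem_map, mem_neighborFinset, starUnion_adj_zero, Fin.valEmbedding_apply, mem_Icc]
    exact ⟨by rintro ⟨v, hv, rfl⟩; exact hv, fun hi => ⟨⟨i, by omega⟩, hi, rfl⟩⟩
  rw [← card_neighborFinset_eq_degree, ← card_map, hN, Nat.card_Icc, Nat.add_sub_cancel]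

theorem star_union_unique_max_general (n m : ℕ) (hm : m ≤ n - 2)
    (B : SimpleGraph (Fin n)) (hbip : B.Colorable 2) (hedges : B.edgeSet.ncard = m) :
    sigma2 B ≤ sigma2 (starUnion n m) ∧
      (sigma2 B = sigma2 (starUnion n m) → Nonempty (B ≃g starUnion n m)) := by
  classical
  have hB : #B.edgeFinset = m := by rw [← hedges, ← coe_edgeFinset, Set.ncard_coe_finset]
  obtain rfl | hm0 := Nat.eq_zero_or_pos m
  · obtain rfl : B = ⊥ := edgeFinset_eq_empty.mp (card_eq_zero.mp hB)
    rw [starUnion_zero_right]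
    exact ⟨le_rfl, fun _ => ⟨Iso.refl⟩⟩
  have hS := starUnion_isVertexCover m (by omega : 0 < n)
  have hSdeg := starUnion_degree (by omega : m < n)
  have hSsigma : sigma2 (starUnion n m) = m * (m + 1) := by
    rw [sigma2_eq_sum_degree_sq, sum_degree_sq_eq_iff.mpr fun _ _ => hS.pair_of_singleton,
      ← hS.degree_eq_card_edgeFinset_of_singleton, hSdeg]
  rw [hSsigma, sigma2_eq_sum_degree_sq]
  refine ⟨hB ▸ sum_degree_sq_le B, fun hBsigma => ?_⟩
  obtain ⟨e, he⟩ := card_pos.mp (hB ▸ hm0 : 0 < #B.edgeFinset)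
  induction e with | h u v => ?_
  obtain ⟨c, hc⟩ := exists_isVertexCover_singleton_of_cliqueFree
    (sum_degree_sq_eq_iff.mp (by rwa [hB])) (hbip.cliqueFree (by norm_num))
    (mem_edgeFinset.mp he)
  exact hc.nonempty_iso_of_singleton hS
    (by rw [hc.degree_eq_card_edgeFinset_of_singleton, hB, hSdeg])

/-- for `n ≥ 2` and `0 ≤ m ≤ n - 2`, the unique bipartite graph on `n`
vertices with `m` edges maximizing the sum of squares of degrees is
`K_{1,m} ∪ S_{n-m-1}`. -/
theorem star_union_unique_max (n m : ℕ) (hn : 2 ≤ n) (hm : m ≤ n - 2)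
    (B : SimpleGraph (Fin n)) (hbip : B.Colorable 2) (hedges : B.edgeSet.ncard = m) :
    sigma2 B ≤ sigma2 (starUnion n m) ∧
      (sigma2 B = sigma2 (starUnion n m) → Nonempty (B ≃g starUnion n m)) :=
  star_union_unique_max_general n m hm B hbip hedges
end

section
/- Among all bipartite graphs with n ≥ 2 vertices and exactly n - 1 edges, the unique graph maximizing the sum of squares of degrees is the star K_{1,n-1}. -/
open Finset

/-- The star `K_{1,n-1}` on `Fin n`: vertex `0` joined to all other vertices. -/
def starGraph (n : ℕ) : SimpleGraph (Fin n) :=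
  SimpleGraph.fromRel (fun u v => u.val = 0 ∧ 1 ≤ v.val)

lemma ncard_neighborSet_eq_degree {n : ℕ} (G : SimpleGraph (Fin n)) [DecidableRel G.Adj]
    (v : Fin n) : (G.neighborSet v).ncard = G.degree v := by
  rw [← Nat.card_coe_set_eq, Nat.card_eq_fintype_card, SimpleGraph.card_neighborSet_eq_degree]

lemma sigma2_eq {n : ℕ} (G : SimpleGraph (Fin n)) [DecidableRel G.Adj] :
    sigma2 G = ∑ v, G.degree v ^ 2 := by
  unfold sigma2
  simp [ncard_neighborSet_eq_degree]

lemma star_adj {n : ℕ} [NeZero n] (x y : Fin n) :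
    (starGraph n).Adj x y ↔ (x = 0 ∧ y ≠ 0) ∨ (y = 0 ∧ x ≠ 0) := by
  simp only [starGraph, SimpleGraph.fromRel_adj, ne_eq, Fin.ext_iff, Fin.val_zero]
  omega

lemma star_neighborSet_zero {n : ℕ} [NeZero n] :
    (starGraph n).neighborSet 0 = {y : Fin n | y ≠ 0} := by
  ext y; simp [SimpleGraph.neighborSet, star_adj]

lemma star_neighborSet_ne {n : ℕ} [NeZero n] (v : Fin n) (hv : v ≠ 0) :
    (starGraph n).neighborSet v = {(0 : Fin n)} := by
  ext y
  simp only [SimpleGraph.mem_neighborSet, star_adj, Set.mem_singleton_iff]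
  constructor
  · rintro (⟨h1, _⟩ | ⟨h1, _⟩)
    · exact absurd h1 hv
    · exact h1
  · rintro rfl; exact Or.inr ⟨rfl, hv⟩

lemma sigma2_star {n : ℕ} (hn : 2 ≤ n) : sigma2 (starGraph n) = n * (n - 1) := by
  haveI : NeZero n := ⟨by omega⟩
  unfold sigma2
  have h0 : ((starGraph n).neighborSet 0).ncard = n - 1 := by
    rw [star_neighborSet_zero]
    have he : {y : Fin n | y ≠ 0} = ({0} : Set (Fin n))ᶜ := by ext; simp
    rw [he, Set.ncard_eq_toFinset_card', Set.toFinset_compl, Set.toFinset_singleton,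
      Finset.compl_singleton, Finset.card_erase_of_mem (Finset.mem_univ _),
      Finset.card_univ, Fintype.card_fin]
  have hne : ∀ v : Fin n, v ≠ 0 → ((starGraph n).neighborSet v).ncard = 1 := by
    intro v hv
    rw [star_neighborSet_ne v hv, Set.ncard_singleton]
  rw [← Finset.add_sum_erase _ _ (Finset.mem_univ (0 : Fin n)), h0]
  rw [Finset.sum_congr rfl (fun v hv => by
    rw [hne v (Finset.ne_of_mem_erase hv)])]
  simp only [one_pow, Finset.sum_const, smul_eq_mul, mul_one,
    Finset.card_erase_of_mem (Finset.mem_univ _), Finset.card_univ, Fintype.card_fin]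
  obtain ⟨m, rfl⟩ : ∃ m, n = m + 1 := ⟨n - 1, by omega⟩
  simp only [Nat.add_sub_cancel]
  ring

lemma bip_disjoint {n : ℕ} (B : SimpleGraph (Fin n)) [DecidableRel B.Adj]
    (hbip : B.Colorable 2) {u v : Fin n} (h : B.Adj u v) :
    Disjoint (B.neighborFinset u) (B.neighborFinset v) := by
  obtain ⟨c⟩ := hbip
  rw [Finset.disjoint_left]
  intro w hwu hwv
  rw [SimpleGraph.mem_neighborFinset] at hwu hwv
  have h1 : (c u).val ≠ (c v).val := fun e => c.valid h (Fin.ext e)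
  have h2 : (c u).val ≠ (c w).val := fun e => c.valid hwu (Fin.ext e)
  have h3 : (c v).val ≠ (c w).val := fun e => c.valid hwv (Fin.ext e)
  have b1 := (c u).isLt
  have b2 := (c v).isLt
  have b3 := (c w).isLt
  omega

lemma bip_deg_bound {n : ℕ} (B : SimpleGraph (Fin n)) [DecidableRel B.Adj]
    (hbip : B.Colorable 2) {u v : Fin n} (h : B.Adj u v) :
    B.degree u + B.degree v ≤ n := by
  calc B.degree u + B.degree v
      = (B.neighborFinset u ∪ B.neighborFinset v).card :=
        (Finset.card_union_of_disjoint (bip_disjoint B hbip h)).symm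
    _ ≤ (Finset.univ : Finset (Fin n)).card := Finset.card_le_card (Finset.subset_univ _)
    _ = n := by simp

lemma double_count {n : ℕ} (B : SimpleGraph (Fin n)) [DecidableRel B.Adj] :
    ∑ v, ∑ w ∈ B.neighborFinset v, (B.degree v + B.degree w) = 2 * sigma2 B := by
  rw [sigma2_eq]
  have hsplit : ∑ v, ∑ w ∈ B.neighborFinset v, (B.degree v + B.degree w)
      = (∑ v, ∑ _w ∈ B.neighborFinset v, B.degree v)
        + ∑ v, ∑ w ∈ B.neighborFinset v, B.degree w := by
    rw [← Finset.sum_add_distrib]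
    exact Finset.sum_congr rfl fun v _ => by rw [← Finset.sum_add_distrib]
  rw [hsplit]
  have h1 : ∑ v, ∑ _w ∈ B.neighborFinset v, B.degree v = ∑ v, B.degree v ^ 2 := by
    refine Finset.sum_congr rfl fun v _ => ?_
    rw [Finset.sum_const, SimpleGraph.card_neighborFinset_eq_degree, smul_eq_mul, sq]
  have h2 : ∑ v, ∑ w ∈ B.neighborFinset v, B.degree w = ∑ v, B.degree v ^ 2 := by
    rw [Finset.sum_comm' (t' := Finset.univ) (s' := fun w => B.neighborFinset w)
      (fun x y => by simp [SimpleGraph.mem_neighborFinset, B.adj_comm])]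
    refine Finset.sum_congr rfl fun w _ => ?_
    rw [Finset.sum_const, SimpleGraph.card_neighborFinset_eq_degree, smul_eq_mul, sq]
  rw [h1, h2]; ring

/-- for `n ≥ 2`, the unique bipartite graph on `n` vertices with
`n - 1` edges maximizing the sum of squares of degrees is the star `K_{1,n-1}`. -/
theorem star_unique_max (n : ℕ) (hn : 2 ≤ n)
    (B : SimpleGraph (Fin n)) (hbip : B.Colorable 2)
    (hedges : B.edgeSet.ncard = n - 1) :
    sigma2 B ≤ sigma2 (starGraph n) ∧
      (sigma2 B = sigma2 (starGraph n) → Nonempty (B ≃g starGraph n)) := by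
  classical
  haveI : NeZero n := ⟨by omega⟩
  haveI : DecidableRel B.Adj := Classical.decRel _
  have hE : B.edgeFinset.card = n - 1 := by
    rw [SimpleGraph.edgeFinset_card, ← Nat.card_eq_fintype_card, Nat.card_coe_set_eq, hedges]
  have hsum : ∑ v, B.degree v = 2 * (n - 1) := by
    rw [SimpleGraph.sum_degrees_eq_twice_card_edges, hE]
  have hb : ∀ v : Fin n, ∀ w ∈ B.neighborFinset v, B.degree v + B.degree w ≤ n :=
    fun v w hw => bip_deg_bound B hbip ((SimpleGraph.mem_neighborFinset _ _ _).1 hw)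
  have hRHS : ∑ v : Fin n, ∑ _w ∈ B.neighborFinset v, n = 2 * (n * (n - 1)) := by
    have : ∑ v : Fin n, ∑ _w ∈ B.neighborFinset v, n = ∑ v, n * B.degree v := by
      refine Finset.sum_congr rfl fun v _ => ?_
      rw [Finset.sum_const, SimpleGraph.card_neighborFinset_eq_degree, smul_eq_mul, mul_comm]
    rw [this, ← Finset.mul_sum, hsum]; ring
  have hineq : 2 * sigma2 B ≤ 2 * (n * (n - 1)) := by
    rw [← double_count, ← hRHS]
    exact Finset.sum_le_sum fun v _ => Finset.sum_le_sum fun w hw => hb v w hw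
  have hle : sigma2 B ≤ sigma2 (starGraph n) := by
    rw [sigma2_star hn]; omega
  refine ⟨hle, fun heq => ?_⟩
  -- pointwise equality on edges
  have hEq2 : ∑ v, ∑ w ∈ B.neighborFinset v, (B.degree v + B.degree w)
      = ∑ v : Fin n, ∑ _w ∈ B.neighborFinset v, n := by
    rw [double_count, hRHS, heq, sigma2_star hn]
  have hpt : ∀ u v : Fin n, B.Adj u v → B.degree u + B.degree v = n := by
    have h1 := (Finset.sum_eq_sum_iff_of_le
      (fun v (_ : v ∈ Finset.univ) => Finset.sum_le_sum fun w hw => hb v w hw)).1 hEq2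
    intro u v huv
    exact (Finset.sum_eq_sum_iff_of_le fun w hw => hb u w hw).1 (h1 u (Finset.mem_univ u)) v
      ((SimpleGraph.mem_neighborFinset _ _ _).2 huv)
  -- there is an edge
  obtain ⟨u, v, huv⟩ : ∃ u v : Fin n, B.Adj u v := by
    have hpos : 0 < B.edgeFinset.card := by omega
    obtain ⟨e, he⟩ := Finset.card_pos.1 hpos
    revert he
    refine e.ind fun u v he => ?_
    exact ⟨u, v, (SimpleGraph.mem_edgeSet B).1 (SimpleGraph.mem_edgeFinset.1 he)⟩
  -- find the center
  obtain ⟨c, hc⟩ : ∃ c : Fin n, B.degree c = n - 1 := by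
    have habn : B.degree u + B.degree v = n := hpt u v huv
    have hdisj := bip_disjoint B hbip huv
    have hunion : B.neighborFinset u ∪ B.neighborFinset v = Finset.univ := by
      apply Finset.eq_univ_of_card
      rw [Finset.card_union_of_disjoint hdisj,
        SimpleGraph.card_neighborFinset_eq_degree, SimpleGraph.card_neighborFinset_eq_degree,
        habn, Fintype.card_fin]
    have hNu : ∑ w ∈ B.neighborFinset u, B.degree w = B.degree u * B.degree v := by
      rw [Finset.sum_congr rfl (fun w hw => show B.degree w = B.degree v by
        have := hpt u w ((SimpleGraph.mem_neighborFinset _ _ _).1 hw); omega),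
        Finset.sum_const, SimpleGraph.card_neighborFinset_eq_degree, smul_eq_mul]
    have hNv : ∑ w ∈ B.neighborFinset v, B.degree w = B.degree v * B.degree u := by
      rw [Finset.sum_congr rfl (fun w hw => show B.degree w = B.degree u by
        have := hpt v w ((SimpleGraph.mem_neighborFinset _ _ _).1 hw); omega),
        Finset.sum_const, SimpleGraph.card_neighborFinset_eq_degree, smul_eq_mul]
    have hsum2 : B.degree u * B.degree v + B.degree v * B.degree u = 2 * (n - 1) := by
      rw [← hNu, ← hNv, ← Finset.sum_union hdisj, hunion, hsum]
    have hab : B.degree u * B.degree v = n - 1 := by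
      rw [mul_comm (B.degree v) (B.degree u)] at hsum2; omega
    have hu1 : 1 ≤ B.degree u := Finset.card_pos.2
      ⟨v, (SimpleGraph.mem_neighborFinset _ _ _).2 huv⟩
    have hv1 : 1 ≤ B.degree v := Finset.card_pos.2
      ⟨u, (SimpleGraph.mem_neighborFinset _ _ _).2 huv.symm⟩
    have hor : B.degree u = 1 ∨ B.degree v = 1 := by
      by_contra hcon
      push_neg at hcon
      obtain ⟨h1, h2⟩ := hcon
      have ha2 : 2 ≤ B.degree u := by omega
      have hb2 : 2 ≤ B.degree v := by omega
      have : B.degree u * B.degree v + 1 = B.degree u + B.degree v := by omega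
      nlinarith
    rcases hor with h | h
    · exact ⟨v, by omega⟩
    · exact ⟨u, by omega⟩
  -- every other vertex is adjacent to c
  have hNc : B.neighborFinset c = Finset.univ.erase c := by
    apply Finset.eq_of_subset_of_card_le
    · intro w hw
      exact Finset.mem_erase.2 ⟨fun h => B.irrefl (h ▸ (SimpleGraph.mem_neighborFinset _ _ _).1 hw),
        Finset.mem_univ w⟩
    · rw [Finset.card_erase_of_mem (Finset.mem_univ c), Finset.card_univ, Fintype.card_fin,
        SimpleGraph.card_neighborFinset_eq_degree, hc]
  have hadj : ∀ w : Fin n, w ≠ c → B.Adj c w := by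
    intro w hw
    have : w ∈ B.neighborFinset c := by
      rw [hNc]; exact Finset.mem_erase.2 ⟨hw, Finset.mem_univ w⟩
    exact (SimpleGraph.mem_neighborFinset _ _ _).1 this
  have hdeg1 : ∀ w : Fin n, w ≠ c → B.degree w = 1 := by
    intro w hw
    have := hpt c w (hadj w hw)
    omega
  have hchar : ∀ x y : Fin n, B.Adj x y ↔ (x = c ∧ y ≠ c) ∨ (y = c ∧ x ≠ c) := by
    intro x y
    constructor
    · intro hxy
      by_cases hx : x = c
      · exact Or.inl ⟨hx, fun hy => B.irrefl (hx ▸ hy ▸ hxy)⟩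
      · by_cases hy : y = c
        · exact Or.inr ⟨hy, hx⟩
        · exfalso
          have hsub : ({c, y} : Finset (Fin n)) ⊆ B.neighborFinset x := by
            intro z hz
            rcases Finset.mem_insert.1 hz with rfl | hz
            · exact (SimpleGraph.mem_neighborFinset _ _ _).2 (hadj x hx).symm
            · rw [Finset.mem_singleton.1 hz]
              exact (SimpleGraph.mem_neighborFinset _ _ _).2 hxy
          have h2 : 2 ≤ B.degree x := by
            calc 2 = ({c, y} : Finset (Fin n)).card :=
                  (Finset.card_pair fun h => hy h.symm).symm
              _ ≤ (B.neighborFinset x).card := Finset.card_le_card hsub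
              _ = B.degree x := SimpleGraph.card_neighborFinset_eq_degree _ _
          have := hdeg1 x hx
          omega
    · rintro (⟨rfl, hy⟩ | ⟨rfl, hx⟩)
      · exact hadj y hy
      · exact (hadj x hx).symm
  have hs : ∀ a : Fin n, Equiv.swap c 0 a = 0 ↔ a = c := by
    intro a
    rw [Equiv.apply_eq_iff_eq_symm_apply, Equiv.symm_swap, Equiv.swap_apply_right]
  refine ⟨⟨Equiv.swap c 0, ?_⟩⟩
  intro a b
  rw [star_adj, hchar]
  simp only [ne_eq, hs]
end
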